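/- Let A = (Q, E, s, F) be a GNFA without ε-transitions, and let ≤ be a total order on Q satisfying Axiom 1 (u ≤ v implies u ≼_A v). Then s is the ≤-minimum of Q; that is, Axiom 2 follows from Axiom 1 for GNFAs without ε-transitions. -/

import Mathlib

/-- Strict co-lexicographic order: `α ≺ β` iff `α.reverse` is lexicographically
smaller than `β.reverse`. The empty string is the minimum. -/
def ColexLt {σ : Type*} [LinearOrder σ] (α β : List σ) : Prop :=
  List.Lex (· < ·) α.reverse β.reverse

/-- Non-strict co-lexicographic order `α ≼ β`. -/
def ColexLe {σ : Type*} [LinearOrder σ] (α β : List σ) : Prop :=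
  ColexLt α β ∨ α = β

/-- `α` is a strict suffix of `β`. -/
def IsStrictSuffix {σ : Type*} (α β : List σ) : Prop :=
  α <:+ β ∧ α ≠ β

/-- `p(α, k)`: the prefix of `α` of length `k`. -/
def pref {σ : Type*} (α : List σ) (k : ℕ) : List σ := α.take k

/-- `s(α, k)`: the suffix of `α` of length `k`. -/
def suff {σ : Type*} (α : List σ) (k : ℕ) : List σ := α.drop (α.length - k)

/-- The 1-based rank of a state in a finite linear order: `rankQ u = i` means
`u = Q[i]` in the enumeration `Q[1] < Q[2] < ⋯ < Q[|Q|]`. -/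
noncomputable def rankQ {Q : Type*} [Fintype Q] [LinearOrder Q] (u : Q) : ℕ :=
  {v : Q | v ≤ u}.ncard

/-- `Q[i, j] = {Q[i], …, Q[j]}` (empty if `i > j`). -/
def Qiv (Q : Type*) [Fintype Q] [LinearOrder Q] (i j : ℕ) : Set Q :=
  {u | i ≤ rankQ u ∧ rankQ u ≤ j}

/-- A generalized nondeterministic finite automaton: a finite set of
string-labeled edges `E ⊆ Q × Q × Σ*`, an initial state `s`, final states `F`. -/
structure GNFA (σ Q : Type*) where
  E : Finset (Q × Q × List σ)
  s : Q
  F : Finset Q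

namespace GNFA

variable {σ Q : Type*}

/-- `I A u β` means `β ∈ I_u`: `β` is obtained by concatenating the edge labels
along some path from `s` to `u` (in particular `ε ∈ I_s`). -/
inductive I (A : GNFA σ Q) : Q → List σ → Prop
  | base : I A A.s []
  | step {u v : Q} {α ρ : List σ} : I A u α → (u, v, ρ) ∈ A.E → I A v (α ++ ρ)

/-- Reachability along edges. -/
def Reach (A : GNFA σ Q) : Q → Q → Prop :=
  Relation.ReflTransGen (fun x y => ∃ ρ, (x, y, ρ) ∈ A.E)

/-- Every state is reachable from the initial state and is co-reachable
(final or allows reaching a final state). -/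
def Standard (A : GNFA σ Q) : Prop :=
  (∀ u, A.Reach A.s u) ∧ ∀ u, ∃ f ∈ A.F, A.Reach u f

/-- An ε-walk from `u` to `v`: a (possibly empty) sequence of ε-labeled edges. -/
def EpsWalk (A : GNFA σ Q) : Q → Q → Prop :=
  Relation.ReflTransGen (fun x y => (x, y, ([] : List σ)) ∈ A.E)

/-- An `r`-GNFA: all edge labels have length at most `r`. -/
def Bounded (A : GNFA σ Q) (r : ℕ) : Prop := ∀ e ∈ A.E, e.2.2.length ≤ r

/-- A GNFA without ε-transitions: every edge label is nonempty. -/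
def NoEps (A : GNFA σ Q) : Prop := ∀ e ∈ A.E, e.2.2 ≠ []

/-- `λ(u)`: the set of strings labeling some edge entering `u`. -/
def lab (A : GNFA σ Q) (u : Q) : Set (List σ) := {ρ | ∃ u', (u', u, ρ) ∈ A.E}

/-- `G_⊣(α)`: states `u` such that some `β ∈ I_u` has `α` as a suffix. -/
def Gsuf (A : GNFA σ Q) (α : List σ) : Set Q := {u | ∃ β, I A u β ∧ α <:+ β}

/-- `G*(α)`: states reached by an edge whose label has `α` as a suffix. -/
def Gstar (A : GNFA σ Q) (α : List σ) : Set Q := {u | ∃ ρ ∈ A.lab u, α <:+ ρ}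

section Colex
variable [LinearOrder σ]

/-- The preorder `u ≼_A v`. -/
def Preceq (A : GNFA σ Q) (u v : Q) : Prop :=
  ∀ α β, I A u α → I A v β →
    ¬((I A u α ∧ I A v α) ∧ (I A u β ∧ I A v β)) → ColexLt α β

/-- `G^≺(α)`: states `u` such that every `β ∈ I_u` satisfies `β ≺ α`. -/
def Gprec (A : GNFA σ Q) (α : List σ) : Set Q := {u | ∀ β, I A u β → ColexLt β α}

/-- `G^≺_⊣(α) = G^≺(α) ∪ G_⊣(α)`. -/
def GprecSuf (A : GNFA σ Q) (α : List σ) : Set Q := A.Gprec α ∪ A.Gsuf α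

/-- The linear order on `Q` is a Wheeler order on `A` (Axioms 1–4). -/
def IsWheeler [LinearOrder Q] (A : GNFA σ Q) : Prop :=
  (∀ u v : Q, u ≤ v → A.Preceq u v) ∧
  (∀ u : Q, A.s ≤ u) ∧
  (∀ u' u v' v : Q, ∀ ρ ρ' : List σ, (u', u, ρ) ∈ A.E → (v', v, ρ') ∈ A.E →
      u < v → ¬IsStrictSuffix ρ' ρ → ColexLe ρ ρ') ∧
  (∀ u' u v' v : Q, ∀ ρ : List σ, (u', u, ρ) ∈ A.E → (v', v, ρ) ∈ A.E →
      u < v → u' ≤ v')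

end Colex

section Indexed
variable [Fintype Q] [LinearOrder Q]

/-- `out(Q[1, m], ρ)`: number of edges labeled `ρ` leaving states in `Q[1, m]`. -/
noncomputable def outC (A : GNFA σ Q) (m : ℕ) (ρ : List σ) : ℕ :=
  {e : Q × Q × List σ | e ∈ A.E ∧ rankQ e.1 ≤ m ∧ e.2.2 = ρ}.ncard

/-- `in(Q[1, m], ρ)`: number of edges labeled `ρ` entering states in `Q[1, m]`. -/
noncomputable def inC (A : GNFA σ Q) (m : ℕ) (ρ : List σ) : ℕ :=
  {e : Q × Q × List σ | e ∈ A.E ∧ rankQ e.2.1 ≤ m ∧ e.2.2 = ρ}.ncard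

/-- `A_max[i]`: the largest `j` such that there is an ε-walk from `Q[j]` to `Q[i]`. -/
noncomputable def Amax (A : GNFA σ Q) (i : ℕ) : ℕ :=
  sSup {j | ∃ u v : Q, rankQ u = i ∧ rankQ v = j ∧ A.EpsWalk v u}

/-- `A_min[i]`: the smallest `j` such that there is an ε-walk from `Q[j]` to `Q[i]`. -/
noncomputable def Amin (A : GNFA σ Q) (i : ℕ) : ℕ :=
  sInf {j | ∃ u v : Q, rankQ u = i ∧ rankQ v = j ∧ A.EpsWalk v u}

variable [LinearOrder σ]

/-- `f_k = out(Q[1, |G^≺(p(α, |α|−k))|], s(α, k))`. -/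
noncomputable def fk (A : GNFA σ Q) (α : List σ) (k : ℕ) : ℕ :=
  A.outC ((A.Gprec (pref α (α.length - k))).ncard) (suff α k)

/-- `g_k = out(Q[1, |G^≺_⊣(p(α, |α|−k))|], s(α, k))`. -/
noncomputable def gk (A : GNFA σ Q) (α : List σ) (k : ℕ) : ℕ :=
  A.outC ((A.GprecSuf (pref α (α.length - k))).ncard) (suff α k)

/-- The property defining `j*` in Lemmas 2 and 4 (largest `j` satisfying it):
(i) `in(Q[1, j], s(α, k)) ≤ f_k` for every `0 < k < min{r+1, |α|}`; and
(ii) `ρ ≺ α` for every `ρ ∈ Σ^k ∩ λ(Q[h])`, every `1 ≤ h ≤ j`, every `0 < k < r+1`. -/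
def Jcond (A : GNFA σ Q) (r : ℕ) (α : List σ) (j : ℕ) : Prop :=
  (∀ k, 0 < k → k < min (r + 1) α.length → A.inC j (suff α k) ≤ A.fk α k) ∧
  (∀ k, 0 < k → k < r + 1 → ∀ h, 1 ≤ h → h ≤ j → ∀ u : Q, rankQ u = h →
      ∀ ρ : List σ, ρ.length = k → ρ ∈ A.lab u → ColexLt ρ α)

/-- The property defining `i*` (largest `i ≤ |Q|` satisfying it):
if `i ≥ 1` then `Q[i] ∈ G*(α)`. -/
def Icond (A : GNFA σ Q) (α : List σ) (i : ℕ) : Prop :=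
  1 ≤ i → ∃ u : Q, rankQ u = i ∧ u ∈ A.Gstar α

/-- The property defining `j°` (smallest `j ≤ |Q|` satisfying it):
`in(Q[1, j], s(α, k)) ≥ g_k` for every `0 < k < min{r+1, |α|}` with `g_k > f_k`. -/
def Jcond2 (A : GNFA σ Q) (r : ℕ) (α : List σ) (j : ℕ) : Prop :=
  ∀ k, 0 < k → k < min (r + 1) α.length → A.fk α k < A.gk α k →
    A.gk α k ≤ A.inC j (suff α k)

end Indexed

end GNFA

/-
Suppose some state `u` lies strictly below `s`. Since `u` is reachable, some `α` lies in `I_u`,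
while `ε ∈ I_s`; without ε-transitions, `ε` reaches only `s`, so `ε ∉ I_u`. Axiom 1 then forces
`α ≺ ε`, which is impossible because `ε` is the co-lexicographic minimum.
-/

theorem ColexLt.not_nil_right {σ : Type*} [LinearOrder σ] (α : List σ) : ¬ColexLt α [] := by
  simp only [ColexLt, List.reverse_nil, List.not_lex_nil, not_false_eq_true]

namespace GNFA

variable {σ Q : Type*} {A : GNFA σ Q}

theorem Reach.exists_I {u : Q} (h : A.Reach A.s u) : ∃ α, A.I u α := by
  induction h with
  | refl => exact ⟨[], I.base⟩
  | tail _ hedge ih =>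
    obtain ⟨α, hα⟩ := ih
    obtain ⟨ρ, hρ⟩ := hedge
    exact ⟨α ++ ρ, hα.step hρ⟩

theorem NoEps.eq_s_of_I_nil (hne : A.NoEps) {u : Q} (h : A.I u []) : u = A.s := by
  generalize hβ : ([] : List σ) = β at h
  induction h with
  | base => rfl
  | step _ hedge _ => exact absurd (List.append_eq_nil_iff.mp hβ.symm).2 (hne _ hedge)

theorem NoEps.not_preceq_s [LinearOrder σ] (hne : A.NoEps) {u : Q} (hu : u ≠ A.s) {α : List σ}
    (hα : A.I u α) : ¬A.Preceq u A.s := fun hpre =>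
  ColexLt.not_nil_right α <| hpre α [] hα I.base fun ⟨_, hu_nil, _⟩ =>
    hu (hne.eq_s_of_I_nil hu_nil)

end GNFA

theorem axiom2_of_axiom1_general {σ Q : Type*} [LinearOrder σ]
    [LinearOrder Q] (A : GNFA σ Q)
    (hA : A.Standard) (hne : A.NoEps)
    (hax1 : ∀ u v : Q, u ≤ v → A.Preceq u v) :
    ∀ u : Q, A.s ≤ u := by
  intro u
  by_contra! hlt
  obtain ⟨α, hα⟩ := (hA.1 u).exists_I
  exact hne.not_preceq_s hlt.ne hα (hax1 u A.s hlt.le)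

/-- Let `A` be a GNFA without ε-transitions and let `≤` be a
total order on `Q` satisfying Axiom 1 (`u ≤ v` implies `u ≼_A v`). Then `s` is
the `≤`-minimum of `Q`; i.e., Axiom 2 follows from Axiom 1 for GNFAs without
ε-transitions. -/
theorem axiom2_of_axiom1 {σ Q : Type*} [Fintype σ] [LinearOrder σ]
    [Fintype Q] [LinearOrder Q] (A : GNFA σ Q)
    (hA : A.Standard) (hne : A.NoEps)
    (hax1 : ∀ u v : Q, u ≤ v → A.Preceq u v) :
    ∀ u : Q, A.s ≤ u :=
  axiom2_of_axiom1_general A hA hne hax1
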